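/- arXiv:1211.0998 — 2 statements merged into one kernel-verified Lean document; each statement's English description precedes it below -/
import Mathlib

section
/- Let r ≥ 1 and let M be a simple a_r-module such that T_r : M → M is injective. Then for every α ∈ ℂ, the module N(M,α) is simple: the only subspaces W ⊆ N(M,α) with D_m W ⊆ W for all m ∈ ℤ are 0 and N(M,α). -/
/-!
`D_0` acts on `v ⊗ tⁿ` by the scalar `α + n`, so a `D`-stable subspace `W` is graded, and it
suffices to show that `U = {u | u ⊗ t^N ∈ W for all N}` is all of `M`. For fixed `N` the vectors
`D_m (v ⊗ t^{N-m}) - (α + N - m) (v ⊗ t^N)` and, when `v ⊗ tⁿ ∈ W`, `D_{N-n-m} D_m (v ⊗ tⁿ)` are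
`w(m) ⊗ t^N` with `w` a polynomial in `m` whose coefficients are operators applied to `v`;
as every value lies in the subspace `{u | u ⊗ t^N ∈ W}`, so does every coefficient. The first
family shows that `U` is an `a_r`-submodule. In the second, the coefficient of `m^{2r+2}` is a
nonzero multiple of `T_r (T_r v)` (for `r ≥ 1` the factor `α + n + m` does not reach that degree),
so `U` contains `T_r (T_r v) ≠ 0` and simplicity gives `U = M`.
-/

open Finsupp

variable {M : Type*} [AddCommGroup M] [Module ℂ M]

/-- `(M, T)` is an `a_r`-module: `M` carries operators `T_0, …, T_r` with
`T_i∘T_j − T_j∘T_i = (j−i)·T_{i+j}` for `i+j ≤ r` and `T_i∘T_j = T_j∘T_i` for `i+j > r`. -/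
def IsArModule (r : ℕ) (T : ℕ → Module.End ℂ M) : Prop :=
  (∀ i j, i ≤ r → j ≤ r → i + j ≤ r →
      T i ∘ₗ T j - T j ∘ₗ T i = (((j : ℂ) - (i : ℂ)) • T (i + j))) ∧
  (∀ i j, i ≤ r → j ≤ r → r < i + j → T i ∘ₗ T j = T j ∘ₗ T i)

/-- A subspace `U ⊆ M` is an `a_r`-submodule if `T_i U ⊆ U` for all `0 ≤ i ≤ r`. -/
def IsArSubmodule (r : ℕ) (T : ℕ → Module.End ℂ M) (U : Submodule ℂ M) : Prop :=
  ∀ i ≤ r, ∀ v ∈ U, T i v ∈ U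

/-- `M` is a simple `a_r`-module: nonzero, and the only `a_r`-submodules are `0` and `M`. -/
def IsSimpleArModule (r : ℕ) (T : ℕ → Module.End ℂ M) : Prop :=
  (∃ v : M, v ≠ 0) ∧
    ∀ U : Submodule ℂ M, IsArSubmodule r T U → U = ⊥ ∨ U = ⊤

/-- The operator `D_m` on `N(M, α) = ⊕_{n ∈ ℤ} M ⊗ t^n` (finitely supported functions `ℤ → M`,
with `v ⊗ t^n` the function `Finsupp.single n v`), given by
`D_m (v ⊗ t^n) = ((α+n)•v + Σ_{i=0}^r (m^{i+1}/(i+1)!) • T_i v) ⊗ t^{n+m}`. -/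
noncomputable def Dop (r : ℕ) (T : ℕ → Module.End ℂ M) (α : ℂ) (m : ℤ) :
    (ℤ →₀ M) →ₗ[ℂ] (ℤ →₀ M) :=
  Finsupp.lsum ℂ fun n : ℤ =>
    (Finsupp.lsingle (n + m) : M →ₗ[ℂ] ℤ →₀ M) ∘ₗ
      ((α + (n : ℂ)) • (LinearMap.id : M →ₗ[ℂ] M) +
        ∑ i ∈ Finset.range (r + 1),
          ((m : ℂ) ^ (i + 1) / (Nat.factorial (i + 1) : ℂ)) • (T i : M →ₗ[ℂ] M))

/-- The operator `ω^{(s)}_{l,m} = Σ_{i=0}^s binom(s,i)·(−1)^{s−i}·D_{l−m−i}∘D_{m+i}`. -/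
noncomputable def omegaOp (r : ℕ) (T : ℕ → Module.End ℂ M) (α : ℂ) (s : ℕ) (l m : ℤ) :
    (ℤ →₀ M) →ₗ[ℂ] (ℤ →₀ M) :=
  ∑ i ∈ Finset.range (s + 1),
    ((s.choose i : ℂ) * (-1) ^ (s - i)) •
      (Dop r T α (l - m - (i : ℤ)) ∘ₗ Dop r T α (m + (i : ℤ)))

open Polynomial

theorem Finsupp.single_apply_mem_of_diagonal {ι K V : Type*} [Field K] [AddCommGroup V]
    [Module K V] {f : Module.End K (ι →₀ V)} {μ : ι → K} (hμ : Function.Injective μ)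
    (hf : ∀ i x, f (Finsupp.single i x) = μ i • Finsupp.single i x)
    {W : Submodule K (ι →₀ V)} (hW : W ≤ W.comap f) {w : ι →₀ V} (hw : w ∈ W) (i : ι) :
    Finsupp.single i (w i) ∈ W := by
  classical
  -- `q(f)` kills every component of `w` except the `i`-th one
  set q : K[X] := ∏ j ∈ w.support.erase i, (X - C (μ j))
  have hq_ne : q.eval (μ i) ≠ 0 := by
    simp only [q, eval_prod, eval_sub, eval_X, eval_C]
    exact Finset.prod_ne_zero_iff.mpr fun j hj =>
      sub_ne_zero.mpr (hμ.ne (Finset.ne_of_mem_erase hj).symm)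
  have hq_w : aeval f q w = q.eval (μ i) • Finsupp.single i (w i) := by
    conv_lhs => rw [← Finsupp.sum_single w]
    rw [map_finsuppSum]
    simp only [Module.End.aeval_apply_of_mem_apply_eq_smul (hf _ _)]
    refine Finsupp.sum_eq_single i (fun j hj hji => ?_) (fun _ => by simp)
    have hj_mem : j ∈ w.support.erase i := Finset.mem_erase.mpr ⟨hji, mem_support_iff.mpr hj⟩
    rw [eval_prod, Finset.prod_eq_zero hj_mem (by simp), zero_smul]
  have := W.smul_mem (q.eval (μ i))⁻¹ (aeval_apply_smul_mem_of_le_comap hw q f hW)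
  rwa [hq_w, inv_smul_smul₀ hq_ne] at this

noncomputable def Finsupp.singlesSubmodule {ι R V : Type*} [Semiring R] [AddCommMonoid V]
    [Module R V] (W : Submodule R (ι →₀ V)) : Submodule R V :=
  ⨅ i, W.comap (Finsupp.lsingle i)

theorem Finsupp.mem_singlesSubmodule {ι R V : Type*} [Semiring R] [AddCommMonoid V]
    [Module R V] {W : Submodule R (ι →₀ V)} {v : V} :
    v ∈ Finsupp.singlesSubmodule W ↔ ∀ i, Finsupp.single i v ∈ W := by
  simp [Finsupp.singlesSubmodule]

theorem Finsupp.eq_top_of_singlesSubmodule_eq_top {ι R V : Type*} [Semiring R]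
    [AddCommMonoid V] [Module R V] {W : Submodule R (ι →₀ V)}
    (h : Finsupp.singlesSubmodule W = ⊤) : W = ⊤ := by
  refine eq_top_iff.mpr fun w _ => ?_
  rw [← Finsupp.sum_single w]
  exact Submodule.finsuppSum_mem _ _ _ _ fun i _ =>
    Finsupp.mem_singlesSubmodule.mp (h ▸ Submodule.mem_top) i

theorem Module.algebraMap_end_pow_apply {K V : Type*} [CommSemiring K] [AddCommMonoid V]
    [Module K V] (a : K) (k : ℕ) (v : V) :
    (algebraMap K (Module.End K V) a ^ k) v = a ^ k • v := by
  rw [← map_pow, Module.algebraMap_end_apply]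

-- Evaluation at a central element, hence a ring hom although `A` may be noncommutative.
noncomputable def Polynomial.evalScalar {K A : Type*} [CommSemiring K] [Semiring A]
    [Algebra K A] (z : K) : A[X] →+* A :=
  eval₂RingHom' (RingHom.id A) (algebraMap K A z) fun a => Algebra.commute_algebraMap_right z a

section

variable {K A : Type*} [CommSemiring K] [Semiring A] [Algebra K A]

theorem Polynomial.evalScalar_apply (z : K) (p : A[X]) :
    evalScalar z p = p.eval (algebraMap K A z) :=
  rfl

@[simp]
theorem Polynomial.evalScalar_C (z : K) (a : A) : evalScalar z (C a) = a :=
  eval₂_C _ _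

@[simp]
theorem Polynomial.evalScalar_X (z : K) : evalScalar z (X : A[X]) = algebraMap K A z :=
  eval₂_X _ _

end

theorem Polynomial.coeff_apply_mem_of_forall_evalScalar_intCast_apply_mem {K V : Type*}
    [Field K] [CharZero K] [AddCommGroup V] [Module K V] (U : Submodule K V)
    (p : (Module.End K V)[X]) (v : V) (h : ∀ m : ℤ, evalScalar (m : K) p v ∈ U) (k : ℕ) :
    p.coeff k v ∈ U := by
  -- for each functional `φ` vanishing on `U`, the scalar polynomial `φ (p(X) v)` has every
  -- integer as a root
  rw [← Subspace.dualAnnihilator_dualCoannihilator_eq (W := U), Submodule.mem_dualCoannihilator]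
  intro φ hφ
  rw [Submodule.mem_dualAnnihilator] at hφ
  set d := p.natDegree + 1
  set q : K[X] := ∑ j ∈ Finset.range d, C (φ (p.coeff j v)) * X ^ j
  have hq_eval (m : ℤ) : q.eval (m : K) = φ (evalScalar (m : K) p v) := by
    rw [evalScalar_apply, eval_eq_sum_range' (p := p) (n := d) (Nat.lt_succ_self _)]
    simp only [q, eval_finsetSum, eval_mul, eval_C, eval_pow, eval_X, LinearMap.sum_apply,
      Module.End.mul_apply, Module.algebraMap_end_pow_apply, map_smul, map_sum, smul_eq_mul]
    exact Finset.sum_congr rfl fun _ _ => mul_comm _ _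
  have hq : q = 0 := by
    refine eq_zero_of_infinite_isRoot q
      ((Set.infinite_range_of_injective Int.cast_injective).mono ?_)
    rintro _ ⟨m, rfl⟩
    exact (hq_eval m).trans (hφ _ (h m))
  by_cases hk : k < d
  · simpa [q, finsetSum_coeff, coeff_C_mul_X_pow, hk] using congrArg (coeff · k) hq
  · rw [coeff_eq_zero_of_natDegree_lt (by omega), LinearMap.zero_apply, map_zero]

section

variable (r : ℕ) (T : ℕ → Module.End ℂ M)

noncomputable def symbolPoly (Y : (Module.End ℂ M)[X]) : (Module.End ℂ M)[X] :=
  ∑ i ∈ Finset.range (r + 1), C (((i + 1).factorial : ℂ)⁻¹ • T i) * Y ^ (i + 1)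

theorem evalScalar_symbolPoly {z w : ℂ} {Y : (Module.End ℂ M)[X]}
    (hY : evalScalar z Y = algebraMap ℂ _ w) :
    evalScalar z (symbolPoly r T Y) = evalScalar w (symbolPoly r T X) := by
  simp [symbolPoly, hY]

theorem evalScalar_symbolPoly_X_apply (z : ℂ) (v : M) :
    evalScalar z (symbolPoly r T X) v =
      ∑ i ∈ Finset.range (r + 1), (z ^ (i + 1) / ((i + 1).factorial : ℂ)) • T i v := by
  simp [symbolPoly, LinearMap.sum_apply, Module.End.mul_apply, Module.algebraMap_end_pow_apply,
    smul_smul, div_eq_inv_mul]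

theorem Dop_single (α : ℂ) (m n : ℤ) (v : M) :
    Dop r T α m (Finsupp.single n v) =
      Finsupp.single (n + m) ((α + n) • v + evalScalar (m : ℂ) (symbolPoly r T X) v) := by
  rw [evalScalar_symbolPoly_X_apply, Dop, Finsupp.lsum_single]
  simp [LinearMap.sum_apply]

theorem natDegree_symbolPoly_le {Y : (Module.End ℂ M)[X]} (hY : Y.natDegree ≤ 1) :
    (symbolPoly r T Y).natDegree ≤ r + 1 := by
  refine natDegree_sum_le_of_forall_le _ _ fun i hi => (natDegree_C_mul_le _ _).trans ?_
  have := Finset.mem_range.mp hi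
  exact natDegree_pow_le.trans (by nlinarith)

theorem coeff_symbolPoly_X {i : ℕ} (hi : i ≤ r) :
    (symbolPoly r T X).coeff (i + 1) = ((i + 1).factorial : ℂ)⁻¹ • T i := by
  simp [symbolPoly, finsetSum_coeff, Nat.lt_succ_iff.mpr hi]

theorem coeff_symbolPoly_top {Y : (Module.End ℂ M)[X]} (hY : Y.natDegree ≤ 1) {a : ℂ}
    (ha : Y.coeff 1 = algebraMap ℂ _ a) :
    (symbolPoly r T Y).coeff (r + 1) = (a ^ (r + 1) / ((r + 1).factorial : ℂ)) • T r := by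
  have htop := coeff_pow_of_natDegree_le (m := r + 1) hY
  rw [mul_one] at htop
  rw [symbolPoly, finsetSum_coeff, Finset.sum_range_succ, Finset.sum_eq_zero, zero_add,
    coeff_C_mul, htop, ha]
  · ext v
    simp [Module.algebraMap_end_pow_apply, smul_smul, div_eq_inv_mul]
  · intro i hi
    have := Finset.mem_range.mp hi
    rw [coeff_C_mul, coeff_eq_zero_of_natDegree_lt (natDegree_pow_le.trans_lt (by nlinarith)),
      mul_zero]

end

section

variable {r : ℕ} {T : ℕ → Module.End ℂ M} {α : ℂ} {W : Submodule ℂ (ℤ →₀ M)}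

theorem single_apply_mem_of_Dop_invariant (hW : ∀ m : ℤ, ∀ w ∈ W, Dop r T α m w ∈ W)
    {w : ℤ →₀ M} (hw : w ∈ W) (n : ℤ) : Finsupp.single n (w n) ∈ W := by
  refine Finsupp.single_apply_mem_of_diagonal (f := Dop r T α 0) (μ := fun n : ℤ => α + n)
    (fun a b h => by simpa using h) (fun n v => ?_) (fun w hw => hW 0 w hw) hw n
  rw [Dop_single, evalScalar_symbolPoly_X_apply]
  simp [Finsupp.smul_single]

theorem isArSubmodule_singlesSubmodule (hW : ∀ m : ℤ, ∀ w ∈ W, Dop r T α m w ∈ W) :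
    IsArSubmodule r T (Finsupp.singlesSubmodule W) := by
  intro i hi v hv
  rw [Finsupp.mem_singlesSubmodule] at hv ⊢
  intro N
  have hpoly (m : ℤ) :
      evalScalar (m : ℂ) (symbolPoly r T X) v ∈ W.comap (Finsupp.lsingle N) := by
    have := W.sub_mem (hW m _ (hv (N - m))) (W.smul_mem (α + (N - m : ℤ)) (hv N))
    rwa [Dop_single, sub_add_cancel, Finsupp.smul_single, ← Finsupp.single_sub,
      add_sub_cancel_left] at this
  have := coeff_apply_mem_of_forall_evalScalar_intCast_apply_mem _ _ v hpoly (i + 1)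
  rw [coeff_symbolPoly_X r T hi, LinearMap.smul_apply,
    Submodule.smul_mem_iff _ (by simp [Nat.factorial_ne_zero])] at this
  simpa using this

theorem T_T_apply_mem_singlesSubmodule (hr : 1 ≤ r)
    (hW : ∀ m : ℤ, ∀ w ∈ W, Dop r T α m w ∈ W) {n : ℤ} {v : M}
    (hv : Finsupp.single n v ∈ W) : T r (T r v) ∈ Finsupp.singlesSubmodule W := by
  rw [Finsupp.mem_singlesSubmodule]
  intro N
  set β : Module.End ℂ M := algebraMap ℂ _ (α + n)
  set Y : (Module.End ℂ M)[X] := C (algebraMap ℂ _ ((N - n : ℤ) : ℂ)) - X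
  -- evaluated at `m`, `B` gives the component of `D_m (v ⊗ tⁿ)` and `A` then that of `D_{N-n-m}`
  set A := C β + X + symbolPoly r T Y
  set B := C β + symbolPoly r T X
  have hY : Y.natDegree ≤ 1 :=
    (natDegree_sub_le _ _).trans (max_le ((natDegree_C _).trans_le zero_le_one) natDegree_X_le)
  have hpoly (m : ℤ) : evalScalar (m : ℂ) (A * B) v ∈ W.comap (Finsupp.lsingle N) := by
    have hYm : evalScalar (m : ℂ) Y = algebraMap ℂ _ ((N - (n + m) : ℤ) : ℂ) := by
      rw [map_sub, evalScalar_C, evalScalar_X, ← map_sub]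
      congr 1
      push_cast
      ring
    have hA : evalScalar (m : ℂ) A = algebraMap ℂ _ (α + (n + m : ℤ)) +
        evalScalar ((N - (n + m) : ℤ) : ℂ) (symbolPoly r T X) := by
      rw [map_add, map_add, evalScalar_C, evalScalar_X, evalScalar_symbolPoly r T hYm, ← map_add]
      congr 2
      push_cast
      ring
    have hB : evalScalar (m : ℂ) B = β + evalScalar (m : ℂ) (symbolPoly r T X) := by
      rw [map_add, evalScalar_C]
    have := hW (N - (n + m)) _ (hW m _ hv)
    rw [Dop_single, Dop_single, add_sub_cancel] at this
    rw [Submodule.mem_comap, Finsupp.lsingle_apply, map_mul, Module.End.mul_apply, hA, hB]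
    simpa only [LinearMap.add_apply, Module.algebraMap_end_apply, β] using this
  have hA_deg : A.natDegree ≤ r + 1 :=
    natDegree_add_le_of_degree_le
      (natDegree_add_le_of_degree_le (by simp) (natDegree_X_le.trans (by omega)))
      (natDegree_symbolPoly_le r T hY)
  have hB_deg : B.natDegree ≤ r + 1 :=
    natDegree_add_le_of_degree_le (by simp) (natDegree_symbolPoly_le r T natDegree_X_le)
  have hA_top : A.coeff (r + 1) = ((-1) ^ (r + 1) / ((r + 1).factorial : ℂ)) • T r := by
    have hY1 : Y.coeff 1 = algebraMap ℂ _ (-1) := by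
      simp only [Y, coeff_sub, coeff_C, coeff_X_one, one_ne_zero, if_false, zero_sub, map_neg,
        map_one]
    simp [A, coeff_X_of_ne_one (show r + 1 ≠ 1 by omega), coeff_symbolPoly_top r T hY hY1]
  have hB_top : B.coeff (r + 1) = (1 ^ (r + 1) / ((r + 1).factorial : ℂ)) • T r := by
    simp [B, coeff_symbolPoly_top r T natDegree_X_le (a := 1) (by simp)]
  have htop :=
    coeff_apply_mem_of_forall_evalScalar_intCast_apply_mem _ _ v hpoly ((r + 1) + (r + 1))
  rw [coeff_mul_add_eq_of_natDegree_le hA_deg hB_deg, hA_top, hB_top, Module.End.mul_apply,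
    LinearMap.smul_apply, LinearMap.smul_apply, map_smul, smul_smul,
    Submodule.smul_mem_iff _ (by simp [Nat.factorial_ne_zero])] at htop
  simpa using htop

end

theorem N_simple_general (r : ℕ) (hr : 1 ≤ r) (T : ℕ → Module.End ℂ M)
    (hsimple : IsSimpleArModule r T)
    (hinj : Function.Injective (T r)) (α : ℂ)
    (W : Submodule ℂ (ℤ →₀ M)) (hW : ∀ m : ℤ, ∀ w ∈ W, Dop r T α m w ∈ W) :
    W = ⊥ ∨ W = ⊤ := by
  refine or_iff_not_imp_left.mpr fun hW_ne => ?_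
  obtain ⟨w, hw, hw_ne⟩ := Submodule.exists_mem_ne_zero_of_ne_bot hW_ne
  obtain ⟨n, hn⟩ := Finsupp.ne_iff.mp hw_ne
  have hTT := T_T_apply_mem_singlesSubmodule hr hW (single_apply_mem_of_Dop_invariant hW hw n)
  have hTT_ne : T r (T r (w n)) ≠ 0 := by
    simpa [map_eq_zero_iff _ hinj] using hn
  rcases hsimple.2 _ (isArSubmodule_singlesSubmodule hW) with hbot | htop
  · exact absurd ((Submodule.mem_bot ℂ).mp (hbot ▸ hTT)) hTT_ne
  · exact Finsupp.eq_top_of_singlesSubmodule_eq_top htop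

/-- let `r ≥ 1` and `M` a simple `a_r`-module with `T_r` injective. Then for every
`α ∈ ℂ` the module `N(M,α)` is simple: the only subspaces `W` with `D_m W ⊆ W` for all `m ∈ ℤ`
are `0` and `N(M,α)`. -/
theorem N_simple (r : ℕ) (hr : 1 ≤ r) (T : ℕ → Module.End ℂ M)
    (hT : IsArModule r T) (hsimple : IsSimpleArModule r T)
    (hinj : Function.Injective (T r)) (α : ℂ)
    (W : Submodule ℂ (ℤ →₀ M)) (hW : ∀ m : ℤ, ∀ w ∈ W, Dop r T α m w ∈ W) :
    W = ⊥ ∨ W = ⊤ :=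
  N_simple_general r hr T hsimple hinj α W hW
end

section
/- Let r ∈ ℤ_{≥0} and M an a_r-module. On N(M,0), define for each k ∈ ℤ the shift operator S_k(v⊗t^n) = v⊗t^{n+k}. Then for all n, m ∈ ℤ: D_n ∘ S_m − S_m ∘ D_n = m·S_{m+n}, and S_n ∘ S_m = S_m ∘ S_n. In particular these operators make N(M,0) into a module over the twisted Heisenberg–Virasoro algebra with all three central elements acting by zero. -/
open Finsupp

variable {M : Type*} [AddCommGroup M] [Module ℂ M]

/-- The shift operator `S_k (v ⊗ t^n) = v ⊗ t^{n+k}` on `N(M,0)`. -/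
noncomputable def Sop (k : ℤ) : (ℤ →₀ M) →ₗ[ℂ] (ℤ →₀ M) :=
  Finsupp.lsum ℂ fun n : ℤ => (Finsupp.lsingle (n + k) : M →ₗ[ℂ] ℤ →₀ M)

@[simp]
theorem Sop_single (k n : ℤ) (v : M) :
    (Sop k : (ℤ →₀ M) →ₗ[ℂ] ℤ →₀ M) (single n v) = single (n + k) v := by
  simp [Sop]

theorem Sop_comp_Sop (k l : ℤ) :
    (Sop k : (ℤ →₀ M) →ₗ[ℂ] ℤ →₀ M) ∘ₗ Sop l = Sop (l + k) := by
  ext n v : 2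
  simp [add_assoc]

theorem Sop_commute (k l : ℤ) :
    (Sop k : (ℤ →₀ M) →ₗ[ℂ] ℤ →₀ M) ∘ₗ Sop l = Sop l ∘ₗ Sop k := by
  rw [Sop_comp_Sop, Sop_comp_Sop, add_comm]

theorem Dop_single_s13 (r : ℕ) (T : ℕ → Module.End ℂ M) (α : ℂ) (m n : ℤ) (v : M) :
    Dop r T α m (single n v) =
      single (n + m) ((α + n) • v +
        ∑ i ∈ Finset.range (r + 1), ((m : ℂ) ^ (i + 1) / (i + 1).factorial) • T i v) := by
  simp [Dop, LinearMap.sum_apply]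

/-- Only the `(α + n) • v` part of `D_n` sees the degree, so the commutator with a shift is
the shift scaled by the degree change. -/
theorem Dop_comp_Sop_sub_Sop_comp_Dop (r : ℕ) (T : ℕ → Module.End ℂ M) (α : ℂ) (n m : ℤ) :
    Dop r T α n ∘ₗ (Sop m : (ℤ →₀ M) →ₗ[ℂ] ℤ →₀ M) - Sop m ∘ₗ Dop r T α n
      = (m : ℂ) • (Sop (m + n) : (ℤ →₀ M) →ₗ[ℂ] ℤ →₀ M) := by
  ext k v : 2
  simp only [LinearMap.sub_apply, LinearMap.comp_apply, LinearMap.smul_apply, lsingle_apply,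
    Sop_single, Dop_single_s13]
  rw [show k + m + n = k + (m + n) by ring, show k + n + m = k + (m + n) by ring,
    ← single_sub, smul_single]
  congr 1
  push_cast
  module

theorem heisenberg_virasoro_relations_general (r : ℕ) (T : ℕ → Module.End ℂ M)
    (n m : ℤ) :
    Dop r T 0 n ∘ₗ (Sop m : (ℤ →₀ M) →ₗ[ℂ] ℤ →₀ M) - Sop m ∘ₗ Dop r T 0 n
        = (m : ℂ) • (Sop (m + n) : (ℤ →₀ M) →ₗ[ℂ] ℤ →₀ M) ∧
      (Sop n : (ℤ →₀ M) →ₗ[ℂ] ℤ →₀ M) ∘ₗ Sop m = Sop m ∘ₗ Sop n :=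
  ⟨Dop_comp_Sop_sub_Sop_comp_Dop r T 0 n m, Sop_commute n m⟩

/-- on `N(M,0)`, the operators `D_n` and the shifts `S_k` satisfy
`D_n ∘ S_m − S_m ∘ D_n = m·S_{m+n}` and `S_n ∘ S_m = S_m ∘ S_n`; in particular these make
`N(M,0)` a module over the twisted Heisenberg–Virasoro algebra with all three central elements
acting by zero. -/
theorem heisenberg_virasoro_relations (r : ℕ) (T : ℕ → Module.End ℂ M)
    (hT : IsArModule r T) (n m : ℤ) :
    Dop r T 0 n ∘ₗ (Sop m : (ℤ →₀ M) →ₗ[ℂ] ℤ →₀ M) - Sop m ∘ₗ Dop r T 0 n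
        = (m : ℂ) • (Sop (m + n) : (ℤ →₀ M) →ₗ[ℂ] ℤ →₀ M) ∧
      (Sop n : (ℤ →₀ M) →ₗ[ℂ] ℤ →₀ M) ∘ₗ Sop m = Sop m ∘ₗ Sop n :=
  heisenberg_virasoro_relations_general r T n m
end
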